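/- arXiv:1101.2751 — 3 statements merged into one kernel-verified Lean document; each statement's English description precedes it below -/
import Mathlib

section
/- Let (B, Θ) be a C*-dynamical system over ℝ^d equipped with a covariant C(T)-algebra structure, and let I be a closed ideal of C₀(T). Set J := the closed linear span of {φ • b : φ ∈ I, b ∈ B} in B. Then the linear span of {φ • b : φ ∈ I, b ∈ B^∞} is dense in J ∩ B^∞ for the Fréchet topology of B^∞: for every f ∈ J ∩ B^∞, every k ∈ ℕ and every ε > 0 there exists g in the linear span of {φ • b : φ ∈ I, b ∈ B^∞} such that ‖δ^μ(f − g)‖_B ≤ ε for every multi-index μ ∈ ℕ^d with |μ| ≤ k. -/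
open ZeroAtInfty

/-- A `C(T)`-algebra structure on a C*-algebra `B`: a nondegenerate injective bilinear
action `(φ, b) ↦ φ • b` of `C₀(T, ℂ)` on `B` by central multipliers. -/
structure CTAlgebraStructure (T : Type*) [TopologicalSpace T]
    (B : Type*) [NonUnitalCStarAlgebra B] where
  smul : C₀(T, ℂ) → B → B
  add_left : ∀ (φ ψ : C₀(T, ℂ)) (b : B), smul (φ + ψ) b = smul φ b + smul ψ b
  smul_left : ∀ (c : ℂ) (φ : C₀(T, ℂ)) (b : B), smul (c • φ) b = c • smul φ b
  add_right : ∀ (φ : C₀(T, ℂ)) (a b : B), smul φ (a + b) = smul φ a + smul φ b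
  smul_right : ∀ (c : ℂ) (φ : C₀(T, ℂ)) (b : B), smul φ (c • b) = c • smul φ b
  mul_smul : ∀ (φ ψ : C₀(T, ℂ)) (b : B), smul φ (smul ψ b) = smul (φ * ψ) b
  smul_mul_left : ∀ (φ : C₀(T, ℂ)) (a b : B), smul φ (a * b) = smul φ a * b
  smul_mul_right : ∀ (φ : C₀(T, ℂ)) (a b : B), smul φ (a * b) = a * smul φ b
  star_smul : ∀ (φ : C₀(T, ℂ)) (b : B), star (smul φ b) = smul (star φ) (star b)
  norm_smul_le : ∀ (φ : C₀(T, ℂ)) (b : B), ‖smul φ b‖ ≤ ‖φ‖ * ‖b‖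
  nondegenerate :
    Dense ((Submodule.span ℂ {x : B | ∃ φ b, x = smul φ b} : Submodule ℂ B) : Set B)
  injective : ∀ φ : C₀(T, ℂ), (∀ b : B, smul φ b = 0) → φ = 0

/-- The set of smooth vectors of an action `Θ` of `ℝ^d` on a C*-algebra `B`. -/
def smoothVectors {B : Type*} [NonUnitalCStarAlgebra B] {d : ℕ}
    (Θ : (Fin d → ℝ) → B ≃⋆ₐ[ℂ] B) : Set B :=
  {f : B | ContDiff ℝ (⊤ : ℕ∞) fun X : Fin d → ℝ => Θ X f}

/-- Partial derivative of a function on `ℝ^d` in the `j`-th standard coordinate direction. -/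
noncomputable def coordDeriv {d : ℕ} {E : Type*} [NormedAddCommGroup E] [NormedSpace ℝ E]
    (j : Fin d) (F : (Fin d → ℝ) → E) : (Fin d → ℝ) → E :=
  fun X => fderiv ℝ F X (Pi.single j 1)

/-- Iterated partial derivatives along a list of coordinate directions. -/
noncomputable def multiDeriv {d : ℕ} {E : Type*} [NormedAddCommGroup E] [NormedSpace ℝ E] :
    List (Fin d) → ((Fin d → ℝ) → E) → ((Fin d → ℝ) → E)
  | [], F => F
  | j :: L, F => multiDeriv L (coordDeriv j F)

/-- The list of coordinate directions determined by a multi-index `μ ∈ ℕ^d`. -/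
def multiIndexList {d : ℕ} (μ : Fin d → ℕ) : List (Fin d) :=
  (List.finRange d).flatMap fun j => List.replicate (μ j) j


section Helpers

open ZeroAtInfty Filter

variable {T : Type*} [TopologicalSpace T]

/-- pointwise real-valued in [0,1] -/
def IsUnitlike (φ : C₀(T, ℂ)) : Prop := ∀ t, ∃ r : ℝ, 0 ≤ r ∧ r ≤ 1 ∧ φ t = r

lemma c0_norm_le {f : C₀(T, ℂ)} {C : ℝ} (hC : 0 ≤ C) (h : ∀ t, ‖f t‖ ≤ C) : ‖f‖ ≤ C := by
  rw [← ZeroAtInftyContinuousMap.norm_toBCF_eq_norm]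
  exact (BoundedContinuousFunction.norm_le hC).2 h

lemma IsUnitlike.norm_le_one {φ : C₀(T, ℂ)} (h : IsUnitlike φ) : ‖φ‖ ≤ 1 :=
  c0_norm_le zero_le_one fun t => by
    obtain ⟨r, h0, h1, ht⟩ := h t
    rw [ht, Complex.norm_real]
    rwa [Real.norm_of_nonneg h0]

lemma IsUnitlike.combine {φ₁ φ₂ : C₀(T, ℂ)} (h1 : IsUnitlike φ₁) (h2 : IsUnitlike φ₂) :
    IsUnitlike (φ₁ + φ₂ - φ₁ * φ₂) := fun t => by
  obtain ⟨r, hr0, hr1, hrt⟩ := h1 t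
  obtain ⟨s, hs0, hs1, hst⟩ := h2 t
  refine ⟨r + s - r * s, by nlinarith, by nlinarith, ?_⟩
  simp only [ZeroAtInftyContinuousMap.coe_sub, ZeroAtInftyContinuousMap.coe_add,
    ZeroAtInftyContinuousMap.coe_mul, Pi.sub_apply, Pi.add_apply, Pi.mul_apply]
  rw [hrt, hst]
  push_cast
  ring

lemma exists_unitlike (I : Submodule ℂ C₀(T, ℂ))
    (hIideal : ∀ φ ∈ I, ∀ ψ : C₀(T, ℂ), φ * ψ ∈ I ∧ ψ * φ ∈ I)
    {ψ : C₀(T, ℂ)} (hψ : ψ ∈ I) {δ : ℝ} (hδ : 0 < δ) :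
    ∃ φ ∈ I, IsUnitlike φ ∧ ‖ψ - φ * ψ‖ ≤ δ := by
  obtain ⟨n, hn1, hnδ⟩ : ∃ n : ℕ, 1 ≤ n ∧ 1 ≤ 2 * Real.sqrt n * δ := by
    refine ⟨⌈(δ⁻¹) ^ 2⌉₊ + 1, by omega, ?_⟩
    have h1 : (δ⁻¹) ^ 2 ≤ (⌈(δ⁻¹) ^ 2⌉₊ + 1 : ℝ) := (Nat.le_ceil _).trans (by push_cast; linarith)
    have h2 : δ⁻¹ ≤ Real.sqrt (⌈(δ⁻¹) ^ 2⌉₊ + 1 : ℝ) := by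
      have := Real.sqrt_le_sqrt h1
      rwa [Real.sqrt_sq (by positivity)] at this
    have h3 : (1 : ℝ) = δ⁻¹ * δ := by field_simp
    calc (1:ℝ) = δ⁻¹ * δ := h3
      _ ≤ Real.sqrt (⌈(δ⁻¹) ^ 2⌉₊ + 1 : ℝ) * δ := by
          apply mul_le_mul_of_nonneg_right h2 hδ.le
      _ ≤ 2 * Real.sqrt ((⌈(δ⁻¹) ^ 2⌉₊ + 1 : ℕ) : ℝ) * δ := by
          push_cast
          nlinarith [Real.sqrt_nonneg ((⌈(δ⁻¹) ^ 2⌉₊ + 1 : ℝ)), hδ.le]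
  have hnpos : (0:ℝ) < n := by exact_mod_cast hn1
  set c : ℝ := 1 / n with hc
  have hcpos : 0 < c := by positivity
  set q : T → ℝ := fun t => Complex.normSq (ψ t) with hq
  have hq0 : ∀ t, 0 ≤ q t := fun t => Complex.normSq_nonneg _
  have hqc : ∀ t, 0 < q t + c := fun t => add_pos_of_nonneg_of_pos (hq0 t) hcpos
  have hqcont : Continuous q := Complex.continuous_normSq.comp (map_continuous ψ)
  set φ : C₀(T, ℂ) :=
    { toFun := fun t => ((q t / (q t + c) : ℝ) : ℂ)
      continuous_toFun := Complex.continuous_ofReal.comp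
        (hqcont.div (hqcont.add continuous_const) fun t => (hqc t).ne')
      zero_at_infty' := by
        have h0 : Tendsto (fun t => ψ t) (cocompact T) (nhds 0) := ψ.zero_at_infty'
        have hq0' : Tendsto q (cocompact T) (nhds 0) := by
          have := (Complex.continuous_normSq.tendsto 0).comp h0
          simpa [hq, Function.comp_def] using this
        have : Tendsto (fun t => q t / (q t + c)) (cocompact T) (nhds (0 / (0 + c))) :=
          hq0'.div (hq0'.add tendsto_const_nhds) (by positivity)
        rw [show (0:ℝ) / (0 + c) = 0 by simp] at this
        have := Complex.continuous_ofReal.continuousAt.tendsto.comp this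
        simpa [Function.comp_def] using this } with hφ
  have hφt : ∀ t, φ t = ((q t / (q t + c) : ℝ) : ℂ) := fun t => rfl
  refine ⟨φ, ?_, ?_, ?_⟩
  · -- φ ∈ I
    have haI : ψ * star ψ ∈ I := (hIideal ψ hψ (star ψ)).1
    have key : φ = (n : ℂ) • (ψ * star ψ) - (n : ℂ) • ((ψ * star ψ) * φ) := by
      ext t
      have hψt : ψ t * (star ψ) t = (q t : ℂ) := by
        simp [hq, Complex.star_def, Complex.mul_conj]
      simp only [ZeroAtInftyContinuousMap.coe_sub, ZeroAtInftyContinuousMap.coe_smul,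
        Pi.sub_apply, Pi.smul_apply, ZeroAtInftyContinuousMap.coe_mul, Pi.mul_apply]
      rw [hφt, hψt]
      have hne : (q t + c) ≠ 0 := (hqc t).ne'
      have hnne : (n:ℝ) ≠ 0 := hnpos.ne'
      have hcast : (↑n : ℂ) • (q t : ℂ) - (↑n : ℂ) • ((q t : ℂ) * ((q t / (q t + c) : ℝ) : ℂ))
          = (((n : ℝ) * q t - (n:ℝ) * (q t * (q t / (q t + c))) : ℝ) : ℂ) := by
        push_cast
        rw [smul_eq_mul, smul_eq_mul]
      rw [hcast, Complex.ofReal_inj]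
      have hcn1 : c * (n:ℝ) = 1 := by rw [hc]; field_simp
      set r := q t / (q t + c) with hr
      have hrq : r * (q t + c) = q t := div_mul_cancel₀ _ hne
      linear_combination (n:ℝ) * hrq - r * hcn1
    rw [key]
    exact I.sub_mem (I.smul_mem _ haI) (I.smul_mem _ (hIideal _ haI φ).1)
  · -- unitlike
    intro t
    exact ⟨q t / (q t + c), div_nonneg (hq0 t) (hqc t).le, by
      rw [div_le_one (hqc t)]; linarith [hcpos], hφt t⟩
  · -- norm bound
    refine c0_norm_le hδ.le fun t => ?_
    have hpt : (ψ - φ * ψ) t = ((1 - q t / (q t + c) : ℝ) : ℂ) * ψ t := by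
      simp only [ZeroAtInftyContinuousMap.coe_sub, Pi.sub_apply,
        ZeroAtInftyContinuousMap.coe_mul, Pi.mul_apply]
      rw [hφt]; push_cast; ring
    rw [hpt, norm_mul, Complex.norm_real]
    set u : ℝ := ‖ψ t‖ with hu
    have hqu : q t = u ^ 2 := by
      show Complex.normSq (ψ t) = ‖ψ t‖ ^ 2
      rw [Complex.normSq_eq_norm_sq]
    have h1 : (1 - q t / (q t + c)) = c / (q t + c) := by
      rw [eq_div_iff (hqc t).ne', sub_mul, one_mul, div_mul_cancel₀ _ (hqc t).ne']
      ring
    rw [h1, Real.norm_of_nonneg (div_nonneg hcpos.le (hqc t).le)]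
    -- goal : c / (q t + c) * u ≤ δ
    have hu0 : 0 ≤ u := norm_nonneg _
    rw [hqu]
    have hden : 0 < u ^ 2 + c := add_pos_of_nonneg_of_pos (sq_nonneg u) hcpos
    rw [div_mul_eq_mul_div, div_le_iff₀ hden]
    -- c * u ≤ δ * (u^2 + c)
    have hs : Real.sqrt n ^ 2 = (n:ℝ) := Real.sq_sqrt hnpos.le
    have hs0 : 0 < Real.sqrt n := Real.sqrt_pos.mpr hnpos
    have key : u ≤ δ * ((n:ℝ) * u ^ 2 + 1) := by
      nlinarith [mul_nonneg hδ.le (sq_nonneg (Real.sqrt n * u - 1)),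
        mul_le_mul_of_nonneg_right hnδ hu0, hs, hs0.le, sq_nonneg u]
    have hmul : (u ^ 2 + 1 / (n:ℝ)) * n = (n:ℝ) * u ^ 2 + 1 := by
      rw [add_mul, one_div, inv_mul_cancel₀ hnpos.ne']
      ring
    rw [hc, div_mul_eq_mul_div, one_mul, div_le_iff₀ hnpos, mul_assoc, hmul]
    exact key


namespace CTAlgebraStructure

variable {T : Type*} [TopologicalSpace T] {B : Type*} [NonUnitalCStarAlgebra B]
variable (S : CTAlgebraStructure T B)

lemma neg_left (φ : C₀(T, ℂ)) (b : B) : S.smul (-φ) b = -S.smul φ b := by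
  have h := S.smul_left (-1) φ b
  rw [show ((-1 : ℂ) • φ) = -φ from neg_one_smul ℂ φ,
    show ((-1 : ℂ) • S.smul φ b) = -S.smul φ b from neg_one_smul ℂ _] at h
  exact h

lemma sub_left (φ ψ : C₀(T, ℂ)) (b : B) :
    S.smul (φ - ψ) b = S.smul φ b - S.smul ψ b := by
  rw [sub_eq_add_neg, S.add_left, S.neg_left, sub_eq_add_neg]

lemma neg_right (φ : C₀(T, ℂ)) (b : B) : S.smul φ (-b) = -S.smul φ b := by
  have h := S.smul_right (-1) φ b
  rw [show ((-1 : ℂ) • b) = -b from neg_one_smul ℂ b,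
    show ((-1 : ℂ) • S.smul φ b) = -S.smul φ b from neg_one_smul ℂ _] at h
  exact h

lemma sub_right (φ : C₀(T, ℂ)) (a b : B) :
    S.smul φ (a - b) = S.smul φ a - S.smul φ b := by
  rw [sub_eq_add_neg, S.add_right, S.neg_right, sub_eq_add_neg]

lemma zero_right (φ : C₀(T, ℂ)) : S.smul φ (0 : B) = 0 := by
  have := S.smul_right 0 φ 0
  simpa using this

lemma sub_combine (φ₁ φ₂ : C₀(T, ℂ)) (x : B) :
    x - S.smul (φ₁ + φ₂ - φ₁ * φ₂) x
      = (x - S.smul φ₁ x) - S.smul φ₂ (x - S.smul φ₁ x) := by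
  rw [S.sub_left, S.add_left, S.sub_right, S.mul_smul, mul_comm φ₂ φ₁]
  abel

lemma norm_sub_smul_le {φ : C₀(T, ℂ)} (hφ : ‖φ‖ ≤ 1) (x : B) :
    ‖x - S.smul φ x‖ ≤ 2 * ‖x‖ :=
  calc ‖x - S.smul φ x‖ ≤ ‖x‖ + ‖S.smul φ x‖ := norm_sub_le _ _
    _ ≤ ‖x‖ + ‖φ‖ * ‖x‖ := by linarith [S.norm_smul_le φ x]
    _ ≤ 2 * ‖x‖ := by nlinarith [norm_nonneg x]

end CTAlgebraStructure

lemma isUnitlike_zero {T : Type*} [TopologicalSpace T] : IsUnitlike (0 : C₀(T, ℂ)) :=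
  fun t => ⟨0, le_refl 0, zero_le_one, by simp⟩

section Approx

variable {T : Type*} [TopologicalSpace T] {B : Type*} [NonUnitalCStarAlgebra B]
variable (S : CTAlgebraStructure T B) (I : Submodule ℂ C₀(T, ℂ))

lemma span_approx (hIideal : ∀ φ ∈ I, ∀ ψ : C₀(T, ℂ), φ * ψ ∈ I ∧ ψ * φ ∈ I) :
    ∀ y ∈ Submodule.span ℂ {x : B | ∃ φ ∈ I, ∃ b : B, x = S.smul φ b},
      ∀ ε > (0:ℝ), ∃ φ ∈ I, IsUnitlike φ ∧ ‖y - S.smul φ y‖ ≤ ε := by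
  intro y hy
  induction hy using Submodule.span_induction with
  | mem x hx =>
    obtain ⟨ψ, hψI, b, rfl⟩ := hx
    intro ε hε
    have hb1 : (0:ℝ) < ‖b‖ + 1 := by positivity
    obtain ⟨φ, hφI, hφu, hφψ⟩ := exists_unitlike I hIideal hψI (δ := ε / (‖b‖ + 1))
      (by positivity)
    refine ⟨φ, hφI, hφu, ?_⟩
    rw [S.mul_smul, ← S.sub_left]
    calc ‖S.smul (ψ - φ * ψ) b‖ ≤ ‖ψ - φ * ψ‖ * ‖b‖ := S.norm_smul_le _ _
      _ ≤ (ε / (‖b‖ + 1)) * (‖b‖ + 1) := by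
          apply mul_le_mul hφψ (by linarith) (norm_nonneg b) (by positivity)
      _ = ε := by field_simp
  | zero =>
    intro ε hε
    refine ⟨0, I.zero_mem, isUnitlike_zero, ?_⟩
    rw [S.zero_right]
    simpa using hε.le
  | add x y hx hy ihx ihy =>
    intro ε hε
    obtain ⟨φ₁, h1I, h1u, h1⟩ := ihx (ε/4) (by linarith)
    obtain ⟨φ₂, h2I, h2u, h2⟩ := ihy (ε/4) (by linarith)
    refine ⟨φ₁ + φ₂ - φ₁ * φ₂, ?_, h1u.combine h2u, ?_⟩
    · exact Submodule.sub_mem _ (Submodule.add_mem _ h1I h2I) (hIideal φ₁ h1I φ₂).1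
    · have hx' : ‖x - S.smul (φ₁ + φ₂ - φ₁ * φ₂) x‖ ≤ ε/2 := by
        rw [S.sub_combine]
        calc ‖_ - S.smul φ₂ _‖ ≤ 2 * ‖x - S.smul φ₁ x‖ :=
              S.norm_sub_smul_le h2u.norm_le_one _
          _ ≤ ε/2 := by linarith
      have hy' : ‖y - S.smul (φ₁ + φ₂ - φ₁ * φ₂) y‖ ≤ ε/2 := by
        have hcomm : φ₁ + φ₂ - φ₁ * φ₂ = φ₂ + φ₁ - φ₂ * φ₁ := by
          rw [mul_comm φ₁ φ₂, add_comm φ₁ φ₂]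
        rw [hcomm, S.sub_combine]
        calc ‖_ - S.smul φ₁ _‖ ≤ 2 * ‖y - S.smul φ₂ y‖ :=
              S.norm_sub_smul_le h1u.norm_le_one _
          _ ≤ ε/2 := by linarith
      have hsplit : (x + y) - S.smul (φ₁ + φ₂ - φ₁ * φ₂) (x + y)
          = (x - S.smul (φ₁ + φ₂ - φ₁ * φ₂) x) + (y - S.smul (φ₁ + φ₂ - φ₁ * φ₂) y) := by
        rw [S.add_right]
        abel
      rw [hsplit]
      calc ‖_ + _‖ ≤ ‖x - S.smul (φ₁ + φ₂ - φ₁ * φ₂) x‖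
            + ‖y - S.smul (φ₁ + φ₂ - φ₁ * φ₂) y‖ := norm_add_le _ _
        _ ≤ ε := by linarith
  | smul c x hx ihx =>
    intro ε hε
    have hc1 : (0:ℝ) < ‖c‖ + 1 := by positivity
    obtain ⟨φ, hφI, hφu, h⟩ := ihx (ε/(‖c‖+1)) (by positivity)
    refine ⟨φ, hφI, hφu, ?_⟩
    rw [S.smul_right, ← smul_sub, norm_smul]
    calc ‖c‖ * ‖x - S.smul φ x‖ ≤ ‖c‖ * (ε/(‖c‖+1)) := by
          apply mul_le_mul_of_nonneg_left h (norm_nonneg c)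
      _ ≤ (‖c‖+1) * (ε/(‖c‖+1)) := by
          apply mul_le_mul_of_nonneg_right (by linarith) (by positivity)
      _ = ε := by field_simp

lemma closure_approx (hIideal : ∀ φ ∈ I, ∀ ψ : C₀(T, ℂ), φ * ψ ∈ I ∧ ψ * φ ∈ I) :
    ∀ x ∈ closure ((Submodule.span ℂ
        {x : B | ∃ φ ∈ I, ∃ b : B, x = S.smul φ b} : Submodule ℂ B) : Set B),
      ∀ ε > (0:ℝ), ∃ φ ∈ I, IsUnitlike φ ∧ ‖x - S.smul φ x‖ ≤ ε := by
  intro x hx ε hε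
  obtain ⟨y, hy, hxy⟩ := Metric.mem_closure_iff.mp hx (ε/3) (by linarith)
  obtain ⟨φ, hφI, hφu, hφy⟩ := span_approx S I hIideal y hy (ε/3) (by linarith)
  refine ⟨φ, hφI, hφu, ?_⟩
  have hid : x - S.smul φ x = (x - y) + (y - S.smul φ y) + S.smul φ (y - x) := by
    rw [S.sub_right]
    abel
  rw [hid]
  have h1 : ‖x - y‖ < ε/3 := by rwa [← dist_eq_norm]
  have h3 : ‖S.smul φ (y - x)‖ ≤ ε/3 := by
    calc ‖S.smul φ (y - x)‖ ≤ ‖φ‖ * ‖y - x‖ := S.norm_smul_le _ _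
      _ ≤ 1 * (ε/3) := by
          apply mul_le_mul hφu.norm_le_one _ (norm_nonneg _) zero_le_one
          rw [norm_sub_rev, ← dist_eq_norm]
          exact hxy.le
      _ = ε/3 := one_mul _
  calc ‖_ + _ + _‖ ≤ ‖(x - y) + (y - S.smul φ y)‖ + ‖S.smul φ (y - x)‖ := norm_add_le _ _
    _ ≤ ‖x - y‖ + ‖y - S.smul φ y‖ + ‖S.smul φ (y - x)‖ := by
        linarith [norm_add_le (x - y) (y - S.smul φ y)]
    _ ≤ ε := by linarith

lemma finset_approx (hIideal : ∀ φ ∈ I, ∀ ψ : C₀(T, ℂ), φ * ψ ∈ I ∧ ψ * φ ∈ I) (s : Finset B)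
    (hs : ∀ x ∈ s, x ∈ closure ((Submodule.span ℂ
        {x : B | ∃ φ ∈ I, ∃ b : B, x = S.smul φ b} : Submodule ℂ B) : Set B)) :
    ∀ ε > (0:ℝ), ∃ φ ∈ I, IsUnitlike φ ∧ ∀ x ∈ s, ‖x - S.smul φ x‖ ≤ ε := by
  classical
  induction s using Finset.induction_on with
  | empty =>
    intro ε hε
    exact ⟨0, I.zero_mem, isUnitlike_zero, fun x hx => absurd hx (Finset.notMem_empty x)⟩
  | @insert a s' ha ih =>
    intro ε hε
    obtain ⟨φ₁, h1I, h1u, h1⟩ := closure_approx S I hIideal a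
      (hs a (Finset.mem_insert_self a s')) (ε/2) (by linarith)
    obtain ⟨φ₂, h2I, h2u, h2⟩ := ih (fun x hx => hs x (Finset.mem_insert_of_mem hx))
      (ε/2) (by linarith)
    refine ⟨φ₁ + φ₂ - φ₁ * φ₂,
      Submodule.sub_mem _ (Submodule.add_mem _ h1I h2I) (hIideal φ₁ h1I φ₂).1,
      h1u.combine h2u, ?_⟩
    intro x hx
    rcases Finset.mem_insert.mp hx with rfl | hx'
    · rw [S.sub_combine]
      calc ‖_ - S.smul φ₂ _‖ ≤ 2 * ‖x - S.smul φ₁ x‖ := S.norm_sub_smul_le h2u.norm_le_one _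
        _ ≤ ε := by linarith
    · have hcomm : φ₁ + φ₂ - φ₁ * φ₂ = φ₂ + φ₁ - φ₂ * φ₁ := by
        rw [mul_comm φ₁ φ₂, add_comm φ₁ φ₂]
      rw [hcomm, S.sub_combine]
      calc ‖_ - S.smul φ₁ _‖ ≤ 2 * ‖x - S.smul φ₂ x‖ := S.norm_sub_smul_le h1u.norm_le_one _
        _ ≤ ε := by linarith [h2 x hx']

end Approx

section Calculus

variable {d : ℕ} {E : Type*} [NormedAddCommGroup E] [NormedSpace ℝ E]
variable {E' : Type*} [NormedAddCommGroup E'] [NormedSpace ℝ E']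

lemma coordDeriv_contDiff (j : Fin d) {F : (Fin d → ℝ) → E} (hF : ContDiff ℝ (⊤ : ℕ∞) F) :
    ContDiff ℝ (⊤ : ℕ∞) (coordDeriv j F) := by
  have h1 : ContDiff ℝ (⊤ : ℕ∞) (fderiv ℝ F) := hF.fderiv_right (by simp)
  exact h1.clm_apply contDiff_const

lemma coordDeriv_comp_clm (M : E →L[ℝ] E') (j : Fin d) {F : (Fin d → ℝ) → E}
    (hF : ContDiff ℝ (⊤ : ℕ∞) F) :
    coordDeriv j (fun X => M (F X)) = fun X => M (coordDeriv j F X) := by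
  funext X
  have hdF : DifferentiableAt ℝ F X := hF.differentiable (by simp) X
  have h : fderiv ℝ (fun X => M (F X)) X = M.comp (fderiv ℝ F X) :=
    (M.hasFDerivAt.comp X hdF.hasFDerivAt).fderiv
  simp only [coordDeriv, h, ContinuousLinearMap.coe_comp', Function.comp_apply]

lemma multiDeriv_comp_clm (L : List (Fin d)) (M : E →L[ℝ] E') {F : (Fin d → ℝ) → E}
    (hF : ContDiff ℝ (⊤ : ℕ∞) F) :
    multiDeriv L (fun X => M (F X)) = fun X => M (multiDeriv L F X) := by
  induction L generalizing F with
  | nil => rfl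
  | cons j L ih =>
    show multiDeriv L (coordDeriv j fun X => M (F X)) = _
    rw [coordDeriv_comp_clm M j hF, ih (coordDeriv_contDiff j hF)]
    rfl

lemma coordDeriv_mem {B : Type*} [NonUnitalCStarAlgebra B]
    (J : Submodule ℂ B) (hJ : IsClosed (J : Set B)) (j : Fin d)
    {F : (Fin d → ℝ) → B} (hF : ContDiff ℝ (⊤ : ℕ∞) F) (hmem : ∀ X, F X ∈ J) (X : Fin d → ℝ) :
    coordDeriv j F X ∈ J := by
  set v : Fin d → ℝ := Pi.single j 1 with hv
  have h1 : HasDerivAt (fun t : ℝ => X + t • v) v 0 := by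
    simpa using ((hasDerivAt_id (0:ℝ)).smul_const v).const_add X
  have h2 : HasFDerivAt F (fderiv ℝ F X) (X + (0:ℝ) • v) := by
    simpa using (hF.differentiable (by simp) X).hasFDerivAt
  have hG : HasDerivAt (fun t : ℝ => F (X + t • v)) (fderiv ℝ F X v) 0 :=
    h2.comp_hasDerivAt 0 h1
  have htend := hasDerivAt_iff_tendsto_slope.mp hG
  have hmem' : ∀ t : ℝ, slope (fun t : ℝ => F (X + t • v)) 0 t ∈ J := by
    intro t
    rw [slope_def_module]
    have hsub : F (X + t • v) - F (X + (0:ℝ) • v) ∈ J := J.sub_mem (hmem _) (hmem _)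
    have := J.smul_mem (algebraMap ℝ ℂ (t - 0)⁻¹) hsub
    rwa [algebraMap_smul] at this
  exact hJ.mem_of_tendsto htend (Eventually.of_forall fun t => hmem' t)

lemma multiDeriv_mem {B : Type*} [NonUnitalCStarAlgebra B]
    (J : Submodule ℂ B) (hJ : IsClosed (J : Set B)) (L : List (Fin d)) :
    ∀ (F : (Fin d → ℝ) → B), ContDiff ℝ (⊤ : ℕ∞) F → (∀ X, F X ∈ J) →
      ∀ X, multiDeriv L F X ∈ J := by
  induction L with
  | nil => intro F _ hmem X; exact hmem X
  | cons j L ih =>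
    intro F hF hmem X
    exact ih (coordDeriv j F) (coordDeriv_contDiff j hF)
      (coordDeriv_mem J hJ j hF hmem) X

end Calculus

end Helpers

/-- Let `(B, Θ)` be a C*-dynamical system over `ℝ^d` equipped with a covariant
`C(T)`-algebra structure, and let `I` be a closed ideal of `C₀(T)`.  Set `J` := the closed
linear span of `{φ • b : φ ∈ I, b ∈ B}` in `B`.  Then the linear span of
`{φ • b : φ ∈ I, b ∈ B^∞}` is dense in `J ∩ B^∞` for the Fréchet topology of `B^∞`:
for every `f ∈ J ∩ B^∞`, every `k ∈ ℕ` and every `ε > 0` there exists `g` in that span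
with `‖δ^μ(f − g)‖ ≤ ε` for every multi-index `μ` with `|μ| ≤ k`. -/
theorem span_smul_smooth_denseIn_ideal_smooth
    {T : Type*} [TopologicalSpace T] [LocallyCompactSpace T] [T2Space T]
    {B : Type*} [NonUnitalCStarAlgebra B] {d : ℕ}
    (Θ : (Fin d → ℝ) → B ≃⋆ₐ[ℂ] B)
    (hadd : ∀ (X Y : Fin d → ℝ) (a : B), Θ (X + Y) a = Θ X (Θ Y a))
    (hzero : ∀ a : B, Θ 0 a = a)
    (hcont : ∀ a : B, Continuous fun X : Fin d → ℝ => Θ X a)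
    (S : CTAlgebraStructure T B)
    (hcov : ∀ (X : Fin d → ℝ) (φ : C₀(T, ℂ)) (b : B),
      Θ X (S.smul φ b) = S.smul φ (Θ X b))
    (I : Submodule ℂ C₀(T, ℂ)) (hIclosed : IsClosed (I : Set C₀(T, ℂ)))
    (hIideal : ∀ φ ∈ I, ∀ ψ : C₀(T, ℂ), φ * ψ ∈ I ∧ ψ * φ ∈ I) :
    ∀ f ∈ closure ((Submodule.span ℂ
          {x : B | ∃ φ ∈ I, ∃ b : B, x = S.smul φ b} : Submodule ℂ B) : Set B),
      f ∈ smoothVectors Θ →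
      ∀ k : ℕ, ∀ ε > (0 : ℝ),
        ∃ g ∈ Submodule.span ℂ
            {x : B | ∃ φ ∈ I, ∃ b ∈ smoothVectors Θ, x = S.smul φ b},
          ∀ μ : Fin d → ℕ, (∑ j, μ j) ≤ k →
            ‖multiDeriv (multiIndexList μ) (fun X => Θ X (f - g)) 0‖ ≤ ε := by
  intro f hf hfs k ε hε
  classical
  set gens : Set B := {x : B | ∃ φ ∈ I, ∃ b : B, x = S.smul φ b} with hgens
  -- continuity of each Θ X
  have hΘcont : ∀ X : Fin d → ℝ, Continuous (Θ X) := fun X =>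
    (NonUnitalStarAlgHom.isometry (Θ X) (EquivLike.injective (Θ X))).continuous
  -- invariance of the closure of the span under Θ
  have hΘJ : ∀ (X : Fin d → ℝ), ∀ x ∈ closure ((Submodule.span ℂ gens : Submodule ℂ B) : Set B),
      Θ X x ∈ closure ((Submodule.span ℂ gens : Submodule ℂ B) : Set B) := by
    intro X x hx
    refine map_mem_closure (hΘcont X) hx ?_
    intro y hy
    rw [SetLike.mem_coe] at hy ⊢
    induction hy using Submodule.span_induction with
    | mem z hz =>
      obtain ⟨φ, hφ, b, rfl⟩ := hz
      exact Submodule.subset_span ⟨φ, hφ, Θ X b, hcov X φ b⟩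
    | zero =>
      rw [map_zero]
      exact Submodule.zero_mem _
    | add u v hu hv ihu ihv =>
      rw [map_add]
      exact Submodule.add_mem _ ihu ihv
    | smul c u hu ihu =>
      rw [map_smul]
      exact Submodule.smul_mem _ c ihu
  set F : (Fin d → ℝ) → B := fun X => Θ X f with hFdef
  have hFc : ContDiff ℝ (⊤ : ℕ∞) F := hfs
  have hFJ : ∀ X, F X ∈ closure ((Submodule.span ℂ gens : Submodule ℂ B) : Set B) :=
    fun X => hΘJ X f hf
  -- the closed submodule
  set Jc : Submodule ℂ B := (Submodule.span ℂ gens).topologicalClosure with hJc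
  have hJcoe : (Jc : Set B) = closure ((Submodule.span ℂ gens : Submodule ℂ B) : Set B) :=
    Submodule.topologicalClosure_coe _
  have hJclosed : IsClosed (Jc : Set B) := Submodule.isClosed_topologicalClosure _
  have hFJc : ∀ X, F X ∈ Jc := fun X => by
    rw [← SetLike.mem_coe, hJcoe]; exact hFJ X
  -- the finitely many derivatives to control
  set s : Finset B := (Fintype.piFinset fun _ : Fin d => Finset.range (k+1)).image
      (fun μ : Fin d → ℕ => multiDeriv (multiIndexList μ) F 0) with hsdef
  have hsJ : ∀ x ∈ s, x ∈ closure ((Submodule.span ℂ gens : Submodule ℂ B) : Set B) := by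
    intro x hx
    obtain ⟨μ, -, rfl⟩ := Finset.mem_image.mp hx
    have := multiDeriv_mem Jc hJclosed (multiIndexList μ) F hFc hFJc 0
    rwa [← SetLike.mem_coe, hJcoe] at this
  obtain ⟨φ, hφI, hφu, hφs⟩ := finset_approx S I hIideal s hsJ ε hε
  refine ⟨S.smul φ f, Submodule.subset_span ⟨φ, hφI, f, hfs, rfl⟩, ?_⟩
  intro μ hμ
  -- the continuous linear map x ↦ x - φ • x
  have hMlip : ∀ x : B, ‖x - S.smul φ x‖ ≤ (1 + ‖φ‖) * ‖x‖ := by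
    intro x
    calc ‖x - S.smul φ x‖ ≤ ‖x‖ + ‖S.smul φ x‖ := norm_sub_le _ _
      _ ≤ ‖x‖ + ‖φ‖ * ‖x‖ := by linarith [S.norm_smul_le φ x]
      _ = (1 + ‖φ‖) * ‖x‖ := by ring
  set Mlin : B →ₗ[ℝ] B :=
    { toFun := fun x => x - S.smul φ x
      map_add' := fun x y => by
        show (x + y) - S.smul φ (x + y) = (x - S.smul φ x) + (y - S.smul φ y)
        rw [S.add_right]
        abel
      map_smul' := fun r x => by
        show r • x - S.smul φ (r • x) = r • (x - S.smul φ x)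
        have h1 : S.smul φ (r • x) = r • S.smul φ x := by
          rw [← Complex.coe_smul, S.smul_right, Complex.coe_smul]
        rw [h1, smul_sub] } with hMlin
  set M : B →L[ℝ] B := Mlin.mkContinuous (1 + ‖φ‖) hMlip with hM
  have hMapp : ∀ x : B, M x = x - S.smul φ x := fun x => rfl
  have hcomp : (fun X => Θ X (f - S.smul φ f)) = fun X => M (F X) := by
    funext X
    rw [hMapp, hFdef]
    show Θ X (f - S.smul φ f) = Θ X f - S.smul φ (Θ X f)
    rw [map_sub, hcov]
  rw [hcomp, multiDeriv_comp_clm (multiIndexList μ) M hFc]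
  have hmem : multiDeriv (multiIndexList μ) F 0 ∈ s := by
    rw [hsdef]
    refine Finset.mem_image.mpr ⟨μ, ?_, rfl⟩
    rw [Fintype.mem_piFinset]
    intro j
    rw [Finset.mem_range]
    have hle : μ j ≤ ∑ i, μ i := Finset.single_le_sum (fun i _ => Nat.zero_le (μ i))
      (Finset.mem_univ j)
    omega
  have h := hφs _ hmem
  calc ‖(fun X => M (multiDeriv (multiIndexList μ) F X)) 0‖
      = ‖M (multiDeriv (multiIndexList μ) F 0)‖ := rfl
    _ = ‖multiDeriv (multiIndexList μ) F 0 - S.smul φ (multiDeriv (multiIndexList μ) F 0)‖ := by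
        rw [hMapp]
    _ ≤ ε := h
end

section
/- Let Σ and T be locally compact Hausdorff spaces and q : Σ → T a continuous open surjection. For f ∈ C₀(Σ) define N_f(t) := sup{|f(σ)| : σ ∈ q⁻¹({t})}. Then N_f : T → [0, ∞) is continuous. -/
/-!
Write `N t` for the supremum of `g = ‖f‖` over the fibre `q⁻¹{t}`. For `c ≥ 0` the superlevel set
`{N > c}` is the image `q {g > c}` of an open set, hence open because `q` is open. For `c > 0`
the set `{g ≥ c}` is compact since `f` vanishes at infinity, so its image `q {g ≥ c}` is compact,
hence closed; and `N t < c` exactly when `t` avoids `q {g ≥ c'}` for some `c' ∈ (0, c)`. Thus `N`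
is lower and upper semicontinuous.
-/

open Set Filter Topology ZeroAtInfty

section FiberSup

variable {M T : Type*} {q : M → T} {g : M → ℝ}

/-- Over an empty fibre this is `Real.sSup ∅ = 0`. -/
noncomputable def fiberSup (q : M → T) (g : M → ℝ) (t : T) : ℝ :=
  ⨆ σ : q ⁻¹' {t}, g σ

lemma fiberSup_nonneg (hg0 : ∀ x, 0 ≤ g x) (t : T) : 0 ≤ fiberSup q g t :=
  Real.iSup_nonneg fun σ => hg0 σ

lemma le_fiberSup (hbdd : BddAbove (range g)) (x : M) : g x ≤ fiberSup q g (q x) :=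
  le_ciSup (hbdd.mono <| by rintro _ ⟨σ, rfl⟩; exact ⟨σ, rfl⟩) (⟨x, rfl⟩ : q ⁻¹' {q x})

lemma lt_fiberSup_iff (hbdd : BddAbove (range g)) {c : ℝ} (hc : 0 ≤ c) {t : T} :
    c < fiberSup q g t ↔ ∃ x, q x = t ∧ c < g x := by
  constructor
  · intro hlt
    rcases isEmpty_or_nonempty (q ⁻¹' {t}) with hempty | hne
    · rw [fiberSup, Real.iSup_of_isEmpty] at hlt
      exact absurd hc (not_le.2 hlt)
    · obtain ⟨σ, hσ⟩ := exists_lt_of_lt_ciSup hlt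
      exact ⟨σ, σ.2, hσ⟩
  · rintro ⟨x, rfl, hx⟩
    exact hx.trans_le (le_fiberSup hbdd x)

lemma fiberSup_lt_iff (hg0 : ∀ x, 0 ≤ g x) (hbdd : BddAbove (range g)) {c : ℝ} {t : T} :
    fiberSup q g t < c ↔ ∃ c' ∈ Ioo 0 c, t ∉ q '' {x | c' ≤ g x} := by
  constructor
  · intro hlt
    have h0 := fiberSup_nonneg hg0 (q := q) t
    refine ⟨(fiberSup q g t + c) / 2, ⟨by linarith, by linarith⟩, ?_⟩
    rintro ⟨x, hx : _ ≤ g x, rfl⟩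
    linarith [le_fiberSup hbdd x (q := q)]
  · rintro ⟨c', ⟨hc'0, hc'c⟩, ht⟩
    refine lt_of_le_of_lt (Real.iSup_le (fun σ => ?_) hc'0.le) hc'c
    exact le_of_not_ge fun hσ => ht ⟨σ, hσ, σ.2⟩

variable [TopologicalSpace M] [TopologicalSpace T]

lemma lowerSemicontinuous_fiberSup (hq : IsOpenMap q) (hg : LowerSemicontinuous g)
    (hg0 : ∀ x, 0 ≤ g x) (hbdd : BddAbove (range g)) : LowerSemicontinuous (fiberSup q g) := by
  refine lowerSemicontinuous_iff_isOpen_preimage.2 fun c => ?_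
  rcases lt_or_ge c 0 with hc | hc
  · have hall : fiberSup q g ⁻¹' Ioi c = univ :=
      eq_univ_of_forall fun t => hc.trans_le (fiberSup_nonneg hg0 t)
    exact hall ▸ isOpen_univ
  · have himage : fiberSup q g ⁻¹' Ioi c = q '' (g ⁻¹' Ioi c) := by
      ext t
      simp only [mem_preimage, mem_Ioi, lt_fiberSup_iff hbdd hc, mem_image]
      exact exists_congr fun x => and_comm
    exact himage ▸ hq _ (hg.isOpen_preimage c)

lemma upperSemicontinuous_fiberSup [T2Space T] (hq : Continuous q) (hg0 : ∀ x, 0 ≤ g x)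
    (hbdd : BddAbove (range g)) (hcpt : ∀ c, 0 < c → IsCompact {x | c ≤ g x}) :
    UpperSemicontinuous (fiberSup q g) := by
  refine upperSemicontinuous_iff_isOpen_preimage.2 fun c => ?_
  have hunion : fiberSup q g ⁻¹' Iio c = ⋃ c' ∈ Ioo 0 c, (q '' {x | c' ≤ g x})ᶜ := by
    ext t
    simp only [mem_preimage, mem_Iio, fiberSup_lt_iff hg0 hbdd, mem_iUnion, mem_compl_iff,
      exists_prop]
  rw [hunion]
  exact isOpen_biUnion fun c' hc' => ((hcpt c' hc'.1).image hq).isClosed.isOpen_compl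

end FiberSup

lemma isCompact_setOf_le_of_tendsto_cocompact {M : Type*} [TopologicalSpace M] {g : M → ℝ}
    (hg : Continuous g) (h0 : Tendsto g (cocompact M) (𝓝 0)) {c : ℝ} (hc : 0 < c) :
    IsCompact {x | c ≤ g x} := by
  obtain ⟨K, hK, hsub⟩ := mem_cocompact'.1 (h0 (Iio_mem_nhds hc))
  exact hK.of_isClosed_subset (isClosed_le continuous_const hg) fun x hx =>
    hsub (not_lt.2 hx : ¬g x < c)

theorem fiberwise_sup_norm_continuous_of_isOpenMap_general
    {M : Type*} [TopologicalSpace M]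
    {T : Type*} [TopologicalSpace T] [T2Space T]
    (q : M → T) (hq : Continuous q) (hqopen : IsOpenMap q)
    (f : C₀(M, ℂ)) :
    Continuous (fun t : T => ⨆ σ : q ⁻¹' {t}, ‖f (σ : M)‖) := by
  have hcont : Continuous fun x => ‖f x‖ := (map_continuous f).norm
  have hg0 : ∀ x, 0 ≤ ‖f x‖ := fun x => norm_nonneg _
  have hbdd : BddAbove (range fun x => ‖f x‖) := f.toBCF.bddAbove_range_norm_comp
  have htendsto : Tendsto (fun x => ‖f x‖) (cocompact M) (𝓝 0) := by
    simpa using (zero_at_infty f).norm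
  exact continuous_iff_lower_upperSemicontinuous.2
    ⟨lowerSemicontinuous_fiberSup hqopen hcont.lowerSemicontinuous hg0 hbdd,
      upperSemicontinuous_fiberSup hq hg0 hbdd fun c hc =>
        isCompact_setOf_le_of_tendsto_cocompact hcont htendsto hc⟩

/-- Let `Σ` (here `M`) and `T` be locally compact Hausdorff spaces and `q : M → T` a
continuous open surjection.  For `f ∈ C₀(M)` define
`N_f(t) := sup {|f(σ)| : σ ∈ q⁻¹({t})}`.  Then `N_f : T → [0, ∞)` is continuous. -/
theorem fiberwise_sup_norm_continuous_of_isOpenMap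
    {M : Type*} [TopologicalSpace M] [LocallyCompactSpace M] [T2Space M]
    {T : Type*} [TopologicalSpace T] [LocallyCompactSpace T] [T2Space T]
    (q : M → T) (hq : Continuous q) (hqopen : IsOpenMap q)
    (hqsurj : Function.Surjective q)
    (f : C₀(M, ℂ)) :
    Continuous (fun t : T => ⨆ σ : q ⁻¹' {t}, ‖f (σ : M)‖) :=
  fiberwise_sup_norm_continuous_of_isOpenMap_general q hq hqopen f
end

section
/- Consider the action Θ' of ℝ² on 𝕋 × S³ given by Θ'_{(x,y)}(η; z, w) := (e^{−2πi x} η; z, e^{4πi y} w). Then the map 𝕋 × S³ → ℂ, (η; z, w) ↦ z, is constant on orbits and induces a homeomorphism from the orbit space (𝕋 × S³)/ℝ², endowed with the quotient topology, onto the closed unit disk {ζ ∈ ℂ : |ζ| ≤ 1}. -/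
/-!
The map `(η; z, w) ↦ z` is a continuous surjection from the compact space `𝕋 × S³` onto the
closed disk, and its fibres are exactly the orbits: two points with the same `z` have `η`'s of
modulus `1` and `w`'s of modulus `√(1 - |z|²)`, so they differ by a pair of rotations, which the
action realizes. A continuous bijection from a compact space to a Hausdorff space is a
homeomorphism.
-/

/-- The space `𝕋 × S³`, realized inside `ℂ × ℂ × ℂ`: points `(η; z, w)` with `|η| = 1` and
`|z|² + |w|² = 1`. -/
abbrev TorusS3 : Type :=
  {v : ℂ × ℂ × ℂ // ‖v.1‖ = 1 ∧ ‖v.2.1‖ ^ 2 + ‖v.2.2‖ ^ 2 = 1}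

/-- The orbit relation of the action `Θ'_{(x,y)}(η; z, w) = (e^{−2πi x} η; z, e^{4πi y} w)`
of `ℝ²` on `𝕋 × S³`: `w` is in the orbit of `v` iff `w = Θ'_{(x,y)} v` for some `x, y ∈ ℝ`. -/
def torusS3Rel (v w : TorusS3) : Prop :=
  ∃ x y : ℝ,
    (w : ℂ × ℂ × ℂ) =
      (Complex.exp (-(2 * Real.pi * x) * Complex.I) * (v : ℂ × ℂ × ℂ).1,
       (v : ℂ × ℂ × ℂ).2.1,
       Complex.exp ((4 * Real.pi * y) * Complex.I) * (v : ℂ × ℂ × ℂ).2.2)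

theorem exists_homeomorph_quot_of_compactSpace_of_t2Space {X Y : Type*} [TopologicalSpace X]
    [CompactSpace X] [TopologicalSpace Y] [T2Space Y] {r : X → X → Prop} {f : X → Y}
    (hf : Continuous f) (hsurj : Function.Surjective f) (hr : ∀ x y, r x y ↔ f x = f y) :
    ∃ F : Quot r ≃ₜ Y, ∀ x, F (Quot.mk r x) = f x := by
  let g : Quot r → Y := Quot.lift f fun x y hxy => (hr x y).1 hxy
  have hinj : Function.Injective g := by
    rintro ⟨x⟩ ⟨y⟩ hxy
    exact Quot.sound ((hr x y).2 hxy)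
  have hgsurj : Function.Surjective g := fun y =>
    let ⟨x, hx⟩ := hsurj y
    ⟨Quot.mk r x, hx⟩
  exact ⟨(continuous_quot_lift _ hf).homeoOfEquivCompactToT2
    (f := Equiv.ofBijective g ⟨hinj, hgsurj⟩), fun _ => rfl⟩

theorem Complex.exists_exp_mul_I_mul_eq_of_norm_eq {a b : ℂ} (h : ‖a‖ = ‖b‖) :
    ∃ θ : ℝ, exp (θ * I) * a = b := by
  refine ⟨b.arg - a.arg, ?_⟩
  calc exp (↑(b.arg - a.arg) * I) * a
        = exp (↑(b.arg - a.arg) * I) * (‖a‖ * exp (a.arg * I)) := by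
          rw [norm_mul_exp_arg_mul_I]
    _ = ‖b‖ * exp (b.arg * I) := by
          rw [← h, mul_left_comm, ← exp_add]
          push_cast
          ring_nf
    _ = b := norm_mul_exp_arg_mul_I b

instance : CompactSpace TorusS3 := by
  refine isCompact_iff_compactSpace.mp <|
    (isCompact_closedBall (0 : ℂ × ℂ × ℂ) 1).of_isClosed_subset ?_ ?_
  · exact (isClosed_eq (by fun_prop) continuous_const).inter
      (isClosed_eq (by fun_prop) continuous_const)
  · rintro v ⟨h1, h2⟩
    simp only [Metric.mem_closedBall, dist_zero_right, Prod.norm_def, h1]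
    refine max_le le_rfl (max_le ?_ ?_) <;>
      nlinarith [norm_nonneg v.2.1, norm_nonneg v.2.2]

theorem TorusS3.norm_z_le_one (v : TorusS3) : ‖(v : ℂ × ℂ × ℂ).2.1‖ ≤ 1 := by
  nlinarith [v.2.2, norm_nonneg (v : ℂ × ℂ × ℂ).2.1, sq_nonneg ‖(v : ℂ × ℂ × ℂ).2.2‖]

def TorusS3.toDisk (v : TorusS3) : {ζ : ℂ // ‖ζ‖ ≤ 1} := ⟨(v : ℂ × ℂ × ℂ).2.1, v.norm_z_le_one⟩

theorem TorusS3.continuous_toDisk : Continuous TorusS3.toDisk :=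
  Continuous.subtype_mk (by fun_prop) _

theorem TorusS3.surjective_toDisk : Function.Surjective TorusS3.toDisk := by
  rintro ⟨ζ, hζ⟩
  have hζ2 : ‖ζ‖ ^ 2 ≤ 1 := pow_le_one₀ (norm_nonneg ζ) hζ
  refine ⟨⟨(1, ζ, (√(1 - ‖ζ‖ ^ 2) : ℂ)), norm_one, ?_⟩, rfl⟩
  rw [Complex.norm_real, Real.norm_of_nonneg (Real.sqrt_nonneg _), Real.sq_sqrt (by linarith)]
  ring

theorem torusS3Rel_iff {v w : TorusS3} :
    torusS3Rel v w ↔ (v : ℂ × ℂ × ℂ).2.1 = (w : ℂ × ℂ × ℂ).2.1 := by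
  refine ⟨fun ⟨x, y, hw⟩ => by rw [hw], fun hz => ?_⟩
  obtain ⟨hv1, hv2⟩ := v.2
  obtain ⟨hw1, hw2⟩ := w.2
  obtain ⟨θ, hθ⟩ := Complex.exists_exp_mul_I_mul_eq_of_norm_eq (hv1.trans hw1.symm)
  have hnorm : ‖(v : ℂ × ℂ × ℂ).2.2‖ = ‖(w : ℂ × ℂ × ℂ).2.2‖ := by
    rw [hz] at hv2
    nlinarith [norm_nonneg (v : ℂ × ℂ × ℂ).2.2, norm_nonneg (w : ℂ × ℂ × ℂ).2.2]
  obtain ⟨θ', hθ'⟩ := Complex.exists_exp_mul_I_mul_eq_of_norm_eq hnorm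
  refine ⟨-θ / (2 * Real.pi), θ' / (4 * Real.pi), Prod.ext ?_ (Prod.ext hz.symm ?_)⟩
  · rw [← hθ]
    congr 3
    push_cast
    field_simp
  · rw [← hθ']
    congr 3
    push_cast
    field_simp

/-- Consider the action `Θ'_{(x,y)}(η; z, w) := (e^{−2πi x} η; z, e^{4πi y} w)` of `ℝ²` on
`𝕋 × S³`.  The map `(η; z, w) ↦ z` is constant on orbits and induces a homeomorphism from
the orbit space `(𝕋 × S³)/ℝ²`, endowed with the quotient topology, onto the closed unit
disk `{ζ ∈ ℂ : |ζ| ≤ 1}`. -/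
theorem torusS3_orbit_space_homeomorph_closed_disk :
    (∀ v w : TorusS3, torusS3Rel v w → (v : ℂ × ℂ × ℂ).2.1 = (w : ℂ × ℂ × ℂ).2.1) ∧
    ∃ F : Quot torusS3Rel ≃ₜ {ζ : ℂ // ‖ζ‖ ≤ 1},
      ∀ v : TorusS3, (F (Quot.mk torusS3Rel v) : ℂ) = (v : ℂ × ℂ × ℂ).2.1 := by
  refine ⟨fun v w => torusS3Rel_iff.1, ?_⟩
  obtain ⟨F, hF⟩ := exists_homeomorph_quot_of_compactSpace_of_t2Space
    TorusS3.continuous_toDisk TorusS3.surjective_toDisk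
    fun v w => torusS3Rel_iff.trans (Subtype.ext_iff (a1 := v.toDisk) (a2 := w.toDisk)).symm
  exact ⟨F, fun v => congrArg Subtype.val (hF v)⟩
end
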